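/- arXiv:1906.09098 — 2 statements merged into one kernel-verified Lean document; each statement's English description precedes it below -/
import Mathlib

section
/- Let E_3 be the two-dimensional complex evolution algebra with structural matrix ((1,1),(−1,−1)) (i.e. e₁e₁ = e₁ + e₂, e₂e₂ = −e₁ − e₂). A linear map P : ℂ² → ℂ² is a Rota–Baxter operator of weight 1 on E_3 if and only if its matrix is one of the following, for some b ∈ ℂ: ((−1+b, b),(−b, −1−b)); ((−1−b, b),(b, −1−b)); ((b, b),(−b, −b)); ((−b, b),(b, −b)). -/
/-- The evolution-algebra product on `ℂ²` determined by a structural matrix `A`: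
`e_i · e_i = a_{i1} e₁ + a_{i2} e₂` and `e₁ · e₂ = e₂ · e₁ = 0`. -/
noncomputable def evMulC (A : Matrix (Fin 2) (Fin 2) ℂ) (x y : Fin 2 → ℂ) : Fin 2 → ℂ :=
  fun k => x 0 * y 0 * A 0 k + x 1 * y 1 * A 1 k

/-- `P` is a Rota–Baxter operator of weight `lam` on the evolution algebra with structural
matrix `A`: `P(x)·P(y) = P(x·P(y) + P(x)·y + lam x·y)` for all `x, y`. -/
def IsRotaBaxter (A : Matrix (Fin 2) (Fin 2) ℂ) (lam : ℂ)
    (P : (Fin 2 → ℂ) →ₗ[ℂ] (Fin 2 → ℂ)) : Prop :=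
  ∀ x y : Fin 2 → ℂ,
    evMulC A (P x) (P y) = P (evMulC A x (P y) + evMulC A (P x) y + lam • evMulC A x y)

/-!
In `E₃` the product is `x · y = ω(x, y) • (e₁ + e₂)` with `ω(x, y) = x₁y₁ - x₂y₂`, so the
Rota–Baxter identity says that `ω(Px, Py) • (e₁ + e₂)` is a multiple of `P(e₁ + e₂)`.
On basis pairs this gives six polynomial equations in the entries `a, b, c, d` of `P`. They force
`P(e₁ + e₂) ∈ ℂ (e₁ + e₂)`, i.e. `a + c = b + d`; the mixed equation then factors as
`(b - c)(b + c) = 0` and the `e₁e₁` equation as `(a ± b)(a ± b + λ) = 0`, giving the four families.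
-/

open Matrix

theorem Matrix.vec2_eta {α : Type*} (v : Fin 2 → α) : v = ![v 0, v 1] := by
  ext i; fin_cases i <;> rfl

theorem LinearMap.apply_fin_two {R M : Type*} [CommSemiring R] [AddCommMonoid M] [Module R M]
    (f : (Fin 2 → R) →ₗ[R] M) (x : Fin 2 → R) :
    f x = x 0 • f ![1, 0] + x 1 • f ![0, 1] := by
  conv_lhs => rw [show x = x 0 • ![1, 0] + x 1 • ![0, 1] by ext i; fin_cases i <;> simp]
  rw [map_add, map_smul, map_smul]

local notation "E₃" => !![(1 : ℂ), 1; -1, -1]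

def e3Form (x y : Fin 2 → ℂ) : ℂ := x 0 * y 0 - x 1 * y 1

theorem evMulC_E3 (x y : Fin 2 → ℂ) : evMulC E₃ x y = e3Form x y • ![1, 1] := by
  ext k; fin_cases k <;> simp [evMulC, e3Form] <;> ring

theorem isRotaBaxter_E3_iff (lam : ℂ) (P : (Fin 2 → ℂ) →ₗ[ℂ] (Fin 2 → ℂ)) :
    IsRotaBaxter E₃ lam P ↔ ∀ x y, e3Form (P x) (P y) • ![1, 1] =
      (e3Form x (P y) + e3Form (P x) y + lam * e3Form x y) • P ![1, 1] := by
  simp only [IsRotaBaxter, evMulC_E3, smul_smul, ← add_smul, map_smul]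

section

variable {lam a b c d : ℂ}

theorem isRotaBaxter_E3_iff_entries {P : (Fin 2 → ℂ) →ₗ[ℂ] (Fin 2 → ℂ)}
    (hp : P ![1, 0] = ![a, b]) (hq : P ![0, 1] = ![c, d]) :
    IsRotaBaxter E₃ lam P ↔
      (a ^ 2 - b ^ 2 = (2 * a + lam) * (a + c) ∧ a ^ 2 - b ^ 2 = (2 * a + lam) * (b + d)) ∧
      (c ^ 2 - d ^ 2 = -(2 * d + lam) * (a + c) ∧ c ^ 2 - d ^ 2 = -(2 * d + lam) * (b + d)) ∧
      (a * c - b * d = (c - b) * (a + c) ∧ a * c - b * d = (c - b) * (b + d)) := by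
  have hP : ∀ x, P x = ![x 0 * a + x 1 * c, x 0 * b + x 1 * d] := fun x => by
    rw [LinearMap.apply_fin_two, hp, hq]; ext i; fin_cases i <;> simp
  simp only [isRotaBaxter_E3_iff, e3Form, hP, smul_cons, smul_eq_mul, mul_one, smul_empty,
    vecCons_inj, and_true, cons_val_zero, cons_val_one]
  constructor
  · intro h
    have h11 := h ![1, 0] ![1, 0]
    have h22 := h ![0, 1] ![0, 1]
    have h12 := h ![1, 0] ![0, 1]
    simp only [cons_val_zero, cons_val_one, mul_one, mul_zero, zero_mul, one_mul,
      add_zero, zero_add, sub_zero, zero_sub] at h11 h22 h12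
    exact ⟨⟨by linear_combination h11.1, by linear_combination h11.2⟩,
      ⟨by linear_combination h22.1, by linear_combination h22.2⟩,
      by linear_combination h12.1, by linear_combination h12.2⟩
  · rintro ⟨⟨h11, h11'⟩, ⟨h22, h22'⟩, h12, h12'⟩ x y
    constructor
    · linear_combination x 0 * y 0 * h11 + x 1 * y 1 * h22 + (x 0 * y 1 + x 1 * y 0) * h12
    · linear_combination x 0 * y 0 * h11' + x 1 * y 1 * h22' + (x 0 * y 1 + x 1 * y 0) * h12'

theorem add_eq_add_of_rotaBaxter_E3_eqns
    (h11 : a ^ 2 - b ^ 2 = (2 * a + lam) * (a + c))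
    (h11' : a ^ 2 - b ^ 2 = (2 * a + lam) * (b + d))
    (h22 : c ^ 2 - d ^ 2 = -(2 * d + lam) * (a + c))
    (h22' : c ^ 2 - d ^ 2 = -(2 * d + lam) * (b + d))
    (h12 : a * c - b * d = (c - b) * (a + c)) (h12' : a * c - b * d = (c - b) * (b + d)) :
    a + c = b + d := by
  -- `2a + λ`, `2d + λ` and `c - b` all annihilate `δ = a + c - (b + d)`,
  -- and `δ = ((2a + λ) - (2d + λ)) / 2 + (c - b)`.
  have hsq : (a + c - (b + d)) ^ 2 = 0 := by
    linear_combination (h11' - h11) / 2 + (h22' - h22) / 2 + (h12' - h12)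
  exact sub_eq_zero.mp (pow_eq_zero_iff two_ne_zero |>.mp hsq)

theorem exists_of_rotaBaxter_E3_eqns (hs : a + c = b + d)
    (h11 : a ^ 2 - b ^ 2 = (2 * a + lam) * (a + c)) (h12 : a * c - b * d = (c - b) * (a + c)) :
    ∃ t, ((a = -lam + t ∧ b = t) ∧ c = -t ∧ d = -lam - t) ∨
      ((a = -lam - t ∧ b = t) ∧ c = t ∧ d = -lam - t) ∨
      ((a = t ∧ b = t) ∧ c = -t ∧ d = -t) ∨
      ((a = -t ∧ b = t) ∧ c = t ∧ d = -t) := by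
  have hbc : (b - c) * (b + c) = 0 := by linear_combination h12 - b * hs
  refine ⟨b, ?_⟩
  rcases mul_eq_zero.mp hbc with hcb | hcb
  · have hd : d = a := by linear_combination -hs - hcb
    have hfac : (a + b) * (a + b + lam) = 0 := by linear_combination -h11 + (2 * a + lam) * hcb
    rcases mul_eq_zero.mp hfac with ha | ha
    · exact .inr <| .inr <| .inr ⟨⟨by linear_combination ha, rfl⟩, by linear_combination -hcb,
        by linear_combination hd + ha⟩
    · exact .inr <| .inl ⟨⟨by linear_combination ha, rfl⟩, by linear_combination -hcb,
        by linear_combination hd + ha⟩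
  · have hd : d = a - 2 * b := by linear_combination -hs + hcb
    have hfac : (a - b) * (a - b + lam) = 0 := by linear_combination -h11 - (2 * a + lam) * hcb
    rcases mul_eq_zero.mp hfac with ha | ha
    · exact .inr <| .inr <| .inl ⟨⟨by linear_combination ha, rfl⟩, by linear_combination hcb,
        by linear_combination hd + ha⟩
    · exact .inl ⟨⟨by linear_combination ha, rfl⟩, by linear_combination hcb,
        by linear_combination hd + ha⟩

theorem rotaBaxter_E3_eqns_iff :
    ((a ^ 2 - b ^ 2 = (2 * a + lam) * (a + c) ∧ a ^ 2 - b ^ 2 = (2 * a + lam) * (b + d)) ∧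
      (c ^ 2 - d ^ 2 = -(2 * d + lam) * (a + c) ∧ c ^ 2 - d ^ 2 = -(2 * d + lam) * (b + d)) ∧
      (a * c - b * d = (c - b) * (a + c) ∧ a * c - b * d = (c - b) * (b + d))) ↔
    ∃ t, ((a = -lam + t ∧ b = t) ∧ c = -t ∧ d = -lam - t) ∨
      ((a = -lam - t ∧ b = t) ∧ c = t ∧ d = -lam - t) ∨
      ((a = t ∧ b = t) ∧ c = -t ∧ d = -t) ∨
      ((a = -t ∧ b = t) ∧ c = t ∧ d = -t) := by
  constructor
  · rintro ⟨⟨h11, h11'⟩, ⟨h22, h22'⟩, h12, h12'⟩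
    exact exists_of_rotaBaxter_E3_eqns
      (add_eq_add_of_rotaBaxter_E3_eqns h11 h11' h22 h22' h12 h12') h11 h12
  · rintro ⟨t, ⟨⟨rfl, rfl⟩, rfl, rfl⟩ | ⟨⟨rfl, rfl⟩, rfl, rfl⟩ | ⟨⟨rfl, rfl⟩, rfl, rfl⟩ |
      ⟨⟨rfl, rfl⟩, rfl, rfl⟩⟩ <;>
    exact ⟨⟨by ring, by ring⟩, ⟨by ring, by ring⟩, by ring, by ring⟩

end

/-- Rota–Baxter operators of weight 1 on `E₃` (`e₁e₁ = e₁+e₂, e₂e₂ = -e₁-e₂`). -/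
theorem rb_weight1_E3 (P : (Fin 2 → ℂ) →ₗ[ℂ] (Fin 2 → ℂ)) :
    IsRotaBaxter !![1, 1; -1, -1] 1 P ↔
      ∃ b : ℂ,
        (P ![1, 0] = ![-1 + b, b] ∧ P ![0, 1] = ![-b, -1 - b]) ∨
        (P ![1, 0] = ![-1 - b, b] ∧ P ![0, 1] = ![b, -1 - b]) ∨
        (P ![1, 0] = ![b, b] ∧ P ![0, 1] = ![-b, -b]) ∨
        (P ![1, 0] = ![-b, b] ∧ P ![0, 1] = ![b, -b]) := by
  obtain ⟨a, b, hp⟩ : ∃ a b, P ![1, 0] = ![a, b] := ⟨_, _, vec2_eta _⟩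
  obtain ⟨c, d, hq⟩ : ∃ c d, P ![0, 1] = ![c, d] := ⟨_, _, vec2_eta _⟩
  rw [isRotaBaxter_E3_iff_entries hp hq, rotaBaxter_E3_eqns_iff, hp, hq]
  simp only [vecCons_inj, and_true]
end

section
/- Let E_4 be the two-dimensional complex evolution algebra with structural matrix ((0,1),(0,0)) (i.e. e₁e₁ = e₂, e₂e₂ = 0). A linear map P : ℂ² → ℂ² is a Rota–Baxter operator of weight 1 on E_4 if and only if there exist a, b ∈ ℂ with a ≠ −1/2 such that P has matrix ((a, b),(0, a²/(1+2a))); in particular there is no Rota–Baxter operator of weight 1 on E_4 whose matrix has (1,1)-entry equal to −1/2. -/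
lemma evMulC_nilpotent (x y : Fin 2 → ℂ) : evMulC !![0, 1; 0, 0] x y = ![0, x 0 * y 0] := by
  ext k; fin_cases k <;> simp [evMulC]

lemma LinearMap.apply_eq_fin_two {M : Type*} [AddCommMonoid M] [Module ℂ M]
    (P : (Fin 2 → ℂ) →ₗ[ℂ] M) (x : Fin 2 → ℂ) : P x = x 0 • P ![1, 0] + x 1 • P ![0, 1] := by
  rw [← map_smul, ← map_smul, ← map_add]
  congr 1; ext k; fin_cases k <;> simp

lemma isRotaBaxter_nilpotent_iff_forall (lam : ℂ) (P : (Fin 2 → ℂ) →ₗ[ℂ] (Fin 2 → ℂ)) :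
    IsRotaBaxter !![0, 1; 0, 0] lam P ↔ ∀ x y : Fin 2 → ℂ,
      ![0, P x 0 * P y 0] = (x 0 * P y 0 + P x 0 * y 0 + lam * (x 0 * y 0)) • P ![0, 1] := by
  have hP : ∀ s : ℂ, P ![0, s] = s • P ![0, 1] := fun s => by
    rw [P.apply_eq_fin_two]; simp
  refine forall₂_congr fun x y => ?_
  rw [evMulC_nilpotent, evMulC_nilpotent, evMulC_nilpotent, evMulC_nilpotent, ← hP]
  congr! 2
  ext k; fin_cases k <;> simp

theorem isRotaBaxter_nilpotent_iff (lam : ℂ) (P : (Fin 2 → ℂ) →ₗ[ℂ] (Fin 2 → ℂ)) :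
    IsRotaBaxter !![0, 1; 0, 0] lam P ↔
      P ![0, 1] 0 = 0 ∧ (lam + 2 * P ![1, 0] 0) * P ![0, 1] 1 = P ![1, 0] 0 ^ 2 := by
  rw [isRotaBaxter_nilpotent_iff_forall]
  constructor
  · intro h
    have h₁ := congrFun (h ![1, 0] ![1, 0]) 1
    have h₂ := congrFun (h ![0, 1] ![0, 1]) 1
    simp only [Matrix.cons_val_zero, Matrix.cons_val_one, Pi.smul_apply, smul_eq_mul] at h₁ h₂
    refine ⟨by simpa using h₂, by linear_combination -h₁⟩
  · rintro ⟨hc, hd⟩ x y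
    have hx : P x 0 = x 0 * P ![1, 0] 0 := by rw [P.apply_eq_fin_two]; simp [hc]
    have hy : P y 0 = y 0 * P ![1, 0] 0 := by rw [P.apply_eq_fin_two]; simp [hc]
    ext k; fin_cases k
    · simp [hc]
    · simp only [hx, hy, Fin.mk_one, Matrix.cons_val_one, Matrix.cons_val_fin_one, Pi.smul_apply,
        smul_eq_mul]
      linear_combination (x 0 * y 0) * hd.symm

lemma add_two_mul_ne_zero_of_mul_eq_sq {R : Type*} [CommRing R] [NoZeroDivisors R] {a d lam : R}
    (hlam : lam ≠ 0) (h : (lam + 2 * a) * d = a ^ 2) : lam + 2 * a ≠ 0 := by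
  intro hzero
  have ha : a = 0 := pow_eq_zero_iff two_ne_zero |>.mp (by rw [← h, hzero, zero_mul])
  exact hlam (by simpa [ha] using hzero)

lemma one_add_two_mul_ne_zero_iff {a : ℂ} : 1 + 2 * a ≠ 0 ↔ a ≠ -(1 / 2) :=
  not_congr ⟨fun h => by linear_combination h / 2, fun h => by rw [h]; norm_num⟩

theorem isRotaBaxter_nilpotent_one_iff (P : (Fin 2 → ℂ) →ₗ[ℂ] (Fin 2 → ℂ)) :
    IsRotaBaxter !![0, 1; 0, 0] 1 P ↔
      ∃ a b : ℂ, a ≠ -(1/2) ∧ P ![1, 0] = ![a, b] ∧ P ![0, 1] = ![0, a ^ 2 / (1 + 2 * a)] := by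
  rw [isRotaBaxter_nilpotent_iff]
  constructor
  · rintro ⟨hc, hd⟩
    have hne := add_two_mul_ne_zero_of_mul_eq_sq one_ne_zero hd
    refine ⟨P ![1, 0] 0, P ![1, 0] 1, one_add_two_mul_ne_zero_iff.mp hne,
      by ext k; fin_cases k <;> rfl, ?_⟩
    ext k; fin_cases k
    · simpa using hc
    · simp only [Fin.mk_one, Matrix.cons_val_one, Matrix.cons_val_fin_one]
      rw [eq_div_iff hne, ← hd, mul_comm]
  · rintro ⟨a, b, ha, h₁, h₂⟩
    have hne := one_add_two_mul_ne_zero_iff.mpr ha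
    simp only [h₁, h₂, Matrix.cons_val_zero, Matrix.cons_val_one, true_and]
    field_simp

/-- Rota–Baxter operators of weight 1 on `E₄` (`e₁e₁ = e₂`) are exactly those
with matrix `((a,b),(0, a²/(1+2a)))` for `a ≠ -1/2`; in particular no such operator has
`(1,1)`-entry equal to `-1/2`. -/
theorem rb_weight1_E4 (P : (Fin 2 → ℂ) →ₗ[ℂ] (Fin 2 → ℂ)) :
    (IsRotaBaxter !![0, 1; 0, 0] 1 P ↔
      ∃ a b : ℂ, a ≠ -(1/2) ∧ P ![1, 0] = ![a, b] ∧ P ![0, 1] = ![0, a ^ 2 / (1 + 2 * a)]) ∧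
    (IsRotaBaxter !![0, 1; 0, 0] 1 P → (P ![1, 0]) 0 ≠ -(1/2)) := by
  refine ⟨isRotaBaxter_nilpotent_one_iff P, fun h => ?_⟩
  obtain ⟨-, hd⟩ := (isRotaBaxter_nilpotent_iff 1 P).mp h
  exact one_add_two_mul_ne_zero_iff.mp (add_two_mul_ne_zero_of_mul_eq_sq one_ne_zero hd)
end
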